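/- Let N ≥ 1, d = 2^N, S = σ_z^{⊗N}, Z_0 = (I+S)/2, Z_1 = (I−S)/2, Π^{(2)} = (I + SWAP)/2, ρ_f = (1/2)[(Z_0⊗Z_0)Π^{(2)}/Tr((Z_0⊗Z_0)Π^{(2)}) + (Z_1⊗Z_1)Π^{(2)}/Tr((Z_1⊗Z_1)Π^{(2)})], and 𝒵 = Tr((Z_0⊗Z_0)Π^{(2)}). Then for every d×d unitary U, the Z2-asymmetry generating power A_p(U) = 1 − Tr[(Z_0⊗Z_0 + Z_1⊗Z_1) U^{⊗2} ρ_f U^{†⊗2}] satisfies the out-of-time-ordered-correlator identity A_p(U) = 1 − (1/(4𝒵)) Σ_{s1, s2 ∈ {0,1}} [ (Tr(Z_{s1} U Z_{s2} U†))² + Tr(Z_{s1} U Z_{s2} U† Z_{s1} U Z_{s2} U†) ]. -/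

import Mathlib

open Matrix
open scoped Kronecker

noncomputable section

/-- Index type of the `N`-qubit Hilbert space `ℂ^(2^N)`. -/
abbrev QIdx (N : ℕ) := Fin N → Fin 2

/-- `σ_z^{⊗N}`: the `N`-fold Kronecker power of `diag(1, -1)`. -/
def Smat (N : ℕ) : Matrix (QIdx N) (QIdx N) ℂ :=
  Matrix.diagonal fun x => ∏ i, (-1 : ℂ) ^ (x i : ℕ)

/-- `Z_0 = (I + S)/2` and `Z_1 = (I - S)/2`. -/
def Zproj (N : ℕ) (s : Fin 2) : Matrix (QIdx N) (QIdx N) ℂ :=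
  (2 : ℂ)⁻¹ • (1 + (-1 : ℂ) ^ (s : ℕ) • Smat N)

/-- The flip (SWAP) operator on `ℂ^d ⊗ ℂ^d`. -/
def swapMat (ι : Type*) [DecidableEq ι] : Matrix (ι × ι) (ι × ι) ℂ :=
  fun p q => if p.1 = q.2 ∧ p.2 = q.1 then 1 else 0

/-- `Π^{(2)} = (I + SWAP)/2`. -/
def Pi2 (N : ℕ) : Matrix (QIdx N × QIdx N) (QIdx N × QIdx N) ℂ :=
  (2 : ℂ)⁻¹ • (1 + swapMat (QIdx N))

/-- `ρ_f`, the second moment of the uniform ensemble of `Z2`-free pure states. -/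
def rhoF (N : ℕ) : Matrix (QIdx N × QIdx N) (QIdx N × QIdx N) ℂ :=
  (2 : ℂ)⁻¹ •
    ((Matrix.trace ((Zproj N 0 ⊗ₖ Zproj N 0) * Pi2 N))⁻¹ • ((Zproj N 0 ⊗ₖ Zproj N 0) * Pi2 N) +
     (Matrix.trace ((Zproj N 1 ⊗ₖ Zproj N 1) * Pi2 N))⁻¹ • ((Zproj N 1 ⊗ₖ Zproj N 1) * Pi2 N))

/-- `A_p(U)`, the linear Z2-asymmetry generating power of `U`. -/
def Ap (N : ℕ) (U : Matrix (QIdx N) (QIdx N) ℂ) : ℂ :=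
  1 - Matrix.trace ((Zproj N 0 ⊗ₖ Zproj N 0 + Zproj N 1 ⊗ₖ Zproj N 1) *
      ((U ⊗ₖ U) * rhoF N * (U ⊗ₖ U)ᴴ))

/-! SWAP intertwines `A ⊗ B` with `B ⊗ A`, so `Π^{(2)}` commutes with every `C ⊗ C`, and
`Tr((M ⊗ M) Π^{(2)}) = (Tr(M)² + Tr(M²))/2` for every `M`. Conjugating by `U ⊗ U` therefore turns
each term `Tr((Z_{s1} ⊗ Z_{s1}) U^{⊗2} (Z_{s2} ⊗ Z_{s2}) Π^{(2)} U^{†⊗2})` of `A_p(U)` into this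
expression for `M = Z_{s1} U Z_{s2} U†`. The two normalisations in `ρ_f` coincide because `Z_0` and
`Z_1` are projectors of the same trace `d/2`, as `Tr S = 0` for `N ≥ 1`. -/

open Finset

section Swap

variable {ι : Type*} [Fintype ι] [DecidableEq ι]

lemma trace_kronecker_mul_swapMat (A B : Matrix ι ι ℂ) :
    trace ((A ⊗ₖ B) * swapMat ι) = trace (A * B) := by
  simp [trace, mul_apply, swapMat, Fintype.sum_prod_type, ite_and]

lemma swapMat_mul_kronecker (A B : Matrix ι ι ℂ) :
    swapMat ι * (A ⊗ₖ B) = (B ⊗ₖ A) * swapMat ι := by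
  ext ⟨i, j⟩ ⟨k, l⟩
  simp [mul_apply, swapMat, Fintype.sum_prod_type, ite_and, mul_comm]

end Swap

lemma Pi2_mul_kronecker_self (N : ℕ) (C : Matrix (QIdx N) (QIdx N) ℂ) :
    Pi2 N * (C ⊗ₖ C) = (C ⊗ₖ C) * Pi2 N := by
  rw [Pi2, Matrix.smul_mul, Matrix.mul_smul, add_mul, mul_add, swapMat_mul_kronecker, one_mul,
    mul_one]

lemma trace_kronecker_self_mul_Pi2 (N : ℕ) (M : Matrix (QIdx N) (QIdx N) ℂ) :
    trace ((M ⊗ₖ M) * Pi2 N) = 2⁻¹ * (trace M ^ 2 + trace (M * M)) := by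
  rw [Pi2, Matrix.mul_smul, trace_smul, mul_add, mul_one, trace_add, trace_kronecker,
    trace_kronecker_mul_swapMat, smul_eq_mul, sq]

lemma trace_kronecker_mul_conj_kronecker_mul_Pi2 (N : ℕ) (A B U : Matrix (QIdx N) (QIdx N) ℂ) :
    trace ((A ⊗ₖ A) * ((U ⊗ₖ U) * ((B ⊗ₖ B) * Pi2 N) * (U ⊗ₖ U)ᴴ)) =
      2⁻¹ * (trace (A * U * B * Uᴴ) ^ 2 + trace (A * U * B * Uᴴ * (A * U * B * Uᴴ))) := by
  rw [← trace_kronecker_self_mul_Pi2, conjTranspose_kronecker]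
  simp only [mul_assoc, Pi2_mul_kronecker_self]
  simp only [← mul_assoc, ← mul_kronecker_mul]

lemma Smat_mul_self (N : ℕ) : Smat N * Smat N = 1 := by
  rw [Smat, diagonal_mul_diagonal, ← diagonal_one]
  congr 1
  funext x
  rw [← prod_mul_distrib]
  exact prod_eq_one fun i _ => by rw [← pow_add, (Even.add_self _).neg_one_pow]

lemma trace_Smat (N : ℕ) (hN : 1 ≤ N) : trace (Smat N) = 0 := by
  rw [Smat, trace_diagonal, ← Fintype.prod_sum fun (_ : Fin N) (a : Fin 2) => (-1 : ℂ) ^ (a : ℕ)]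
  simp [Fin.sum_univ_two, zero_pow (Nat.one_le_iff_ne_zero.mp hN)]

lemma Zproj_mul_self (N : ℕ) (s : Fin 2) : Zproj N s * Zproj N s = Zproj N s := by
  set T := (-1 : ℂ) ^ (s : ℕ) • Smat N
  have hT : T * T = 1 := by
    rw [smul_mul_smul, ← pow_add, (Even.add_self _).neg_one_pow, Smat_mul_self, one_smul]
  change (2⁻¹ • (1 + T)) * (2⁻¹ • (1 + T)) = 2⁻¹ • (1 + T)
  rw [smul_mul_smul, add_mul, mul_add, mul_add, one_mul, mul_one, one_mul, hT]
  module

lemma trace_Zproj (N : ℕ) (hN : 1 ≤ N) (s : Fin 2) :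
    trace (Zproj N s) = 2⁻¹ * trace (1 : Matrix (QIdx N) (QIdx N) ℂ) := by
  simp [Zproj, trace_Smat N hN]

lemma trace_kronecker_Zproj_mul_Pi2 (N : ℕ) (hN : 1 ≤ N) (s : Fin 2) :
    trace ((Zproj N s ⊗ₖ Zproj N s) * Pi2 N) = trace ((Zproj N 0 ⊗ₖ Zproj N 0) * Pi2 N) := by
  simp only [trace_kronecker_self_mul_Pi2, Zproj_mul_self, trace_Zproj N hN]

theorem Z2_asymmetry_otoc_general (N : ℕ) (hN : 1 ≤ N)
    (U : Matrix (QIdx N) (QIdx N) ℂ) :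
    Ap N U =
      1 - (1 / (4 * Matrix.trace ((Zproj N 0 ⊗ₖ Zproj N 0) * Pi2 N))) *
        ∑ s1 : Fin 2, ∑ s2 : Fin 2,
          ((Matrix.trace (Zproj N s1 * U * Zproj N s2 * Uᴴ)) ^ 2 +
            Matrix.trace (Zproj N s1 * U * Zproj N s2 * Uᴴ *
              (Zproj N s1 * U * Zproj N s2 * Uᴴ))) := by
  set 𝒵 := trace ((Zproj N 0 ⊗ₖ Zproj N 0) * Pi2 N)
  have hρ : rhoF N = (2 * 𝒵)⁻¹ • ∑ s, (Zproj N s ⊗ₖ Zproj N s) * Pi2 N := by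
    rw [rhoF, trace_kronecker_Zproj_mul_Pi2 N hN 1, Fin.sum_univ_two, smul_add, smul_add,
      smul_smul, smul_smul, mul_inv]
  have hZZ : Zproj N 0 ⊗ₖ Zproj N 0 + Zproj N 1 ⊗ₖ Zproj N 1 = ∑ s, Zproj N s ⊗ₖ Zproj N s := by
    rw [Fin.sum_univ_two]
  rw [Ap, hρ, hZZ]
  simp only [Matrix.mul_smul, Matrix.smul_mul, Matrix.mul_sum, Matrix.sum_mul, trace_smul,
    trace_sum, trace_kronecker_mul_conj_kronecker_mul_Pi2, smul_eq_mul]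
  have hscalar (x : ℂ) : (2 * 𝒵)⁻¹ * (2⁻¹ * x) = 1 / (4 * 𝒵) * x := by ring
  rw [sum_comm]
  simp only [Finset.mul_sum, hscalar]

/-- **Statement 6.** OTOC identity for the Z2-asymmetry generating power:
`A_p(U) = 1 − (1/(4𝒵)) Σ_{s1,s2} [(Tr(Z_{s1} U Z_{s2} U†))² + Tr(Z_{s1} U Z_{s2} U† Z_{s1} U Z_{s2} U†)]`
with `𝒵 = Tr((Z_0⊗Z_0)Π^{(2)})`. -/
theorem Z2_asymmetry_otoc (N : ℕ) (hN : 1 ≤ N)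
    (U : Matrix (QIdx N) (QIdx N) ℂ) (hU : U ∈ Matrix.unitaryGroup (QIdx N) ℂ) :
    Ap N U =
      1 - (1 / (4 * Matrix.trace ((Zproj N 0 ⊗ₖ Zproj N 0) * Pi2 N))) *
        ∑ s1 : Fin 2, ∑ s2 : Fin 2,
          ((Matrix.trace (Zproj N s1 * U * Zproj N s2 * Uᴴ)) ^ 2 +
            Matrix.trace (Zproj N s1 * U * Zproj N s2 * Uᴴ *
              (Zproj N s1 * U * Zproj N s2 * Uᴴ))) :=
  Z2_asymmetry_otoc_general N hN U
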